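/- arXiv:1602.07180 — 6 statements merged into one kernel-verified Lean document; each statement's English description precedes it below -/
import Mathlib

section
/- For every s with 0 < s ≤ 1, there exists no probability measure μ on the positive integers such that μ({x : n ∣ x}) = n^{-s} for all n ≥ 1. In particular, there is no probability measure on ℕ∗ giving the set of multiples of n the measure 1/n for every n. -/
open MeasureTheory

private lemma rpow_neg_le_one {s : ℝ} (hs0 : 0 < s) {p : ℕ} (hp : 1 ≤ p) :
    (p : ℝ) ^ (-s) ≤ 1 := by
  apply Real.rpow_le_one_of_one_le_of_nonpos (by exact_mod_cast hp) (by linarith)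

private lemma rpow_neg_nonneg {s : ℝ} {p : ℕ} : 0 ≤ (p : ℝ) ^ (-s) :=
  Real.rpow_nonneg (Nat.cast_nonneg p) _

/-- Key inclusion-exclusion lemma by induction on a finset of pairwise coprime numbers. -/
private lemma keyA (μ : Measure ℕ) (hprob : IsProbabilityMeasure μ) (s : ℝ) (hs0 : 0 < s)
    (hμ : ∀ n : ℕ, 1 ≤ n → μ {x | n ∣ x} = ENNReal.ofReal ((n : ℝ) ^ (-s)))
    (P : Finset ℕ) (hP1 : ∀ p ∈ P, 1 ≤ p)
    (hPc : (P : Set ℕ).Pairwise Nat.Coprime) :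
    ∀ n : ℕ, 1 ≤ n → (∀ p ∈ P, Nat.Coprime n p) →
      μ ({x | n ∣ x} ∩ ⋂ p ∈ P, {x | ¬ p ∣ x})
        = ENNReal.ofReal ((n : ℝ) ^ (-s) * ∏ p ∈ P, (1 - (p : ℝ) ^ (-s))) := by
  classical
  induction P using Finset.induction_on with
  | empty =>
      intro n hn _
      simp [hμ n hn]
  | @insert a P ha ih =>
      intro n hn hnP
      have ha1 : 1 ≤ a := hP1 a (Finset.mem_insert_self a P)
      have hP1' : ∀ p ∈ P, 1 ≤ p := fun p hp => hP1 p (Finset.mem_insert_of_mem hp)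
      have hPc' : (P : Set ℕ).Pairwise Nat.Coprime :=
        hPc.mono (by simp [Finset.coe_subset])
      have hna : Nat.Coprime n a := hnP a (Finset.mem_insert_self a P)
      have hnP' : ∀ p ∈ P, Nat.Coprime n p := fun p hp => hnP p (Finset.mem_insert_of_mem hp)
      have haP : ∀ p ∈ P, Nat.Coprime a p := by
        intro p hp
        exact hPc (Finset.mem_insert_self a P) (Finset.mem_insert_of_mem hp)
          (by rintro rfl; exact ha hp)
      have hnaP : ∀ p ∈ P, Nat.Coprime (n * a) p :=
        fun p hp => Nat.Coprime.mul (hnP' p hp) (haP p hp)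
      have hna1 : 1 ≤ n * a := Nat.one_le_iff_ne_zero.mpr (by positivity)
      -- set rewriting
      have hset : {x : ℕ | n ∣ x} ∩ ⋂ p ∈ insert a P, {x | ¬ p ∣ x}
          = ({x | n ∣ x} ∩ ⋂ p ∈ P, {x | ¬ p ∣ x})
            \ ({x | n * a ∣ x} ∩ ⋂ p ∈ P, {x | ¬ p ∣ x}) := by
        rw [Finset.set_biInter_insert]
        ext x
        simp only [Set.mem_inter_iff, Set.mem_diff, Set.mem_setOf_eq, Set.mem_iInter]
        constructor
        · rintro ⟨hnx, hax, hPx⟩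
          exact ⟨⟨hnx, hPx⟩, fun h => hax (dvd_trans (dvd_mul_left a n) h.1)⟩
        · rintro ⟨⟨hnx, hPx⟩, hne⟩
          refine ⟨hnx, fun hax => hne ⟨?_, hPx⟩, hPx⟩
          exact Nat.Coprime.mul_dvd_of_dvd_of_dvd hna hnx hax
      have hsub : ({x : ℕ | n * a ∣ x} ∩ ⋂ p ∈ P, {x | ¬ p ∣ x})
          ⊆ ({x | n ∣ x} ∩ ⋂ p ∈ P, {x | ¬ p ∣ x}) :=
        Set.inter_subset_inter_left _ (fun x hx => dvd_trans (Dvd.intro a rfl) hx)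
      have hmeas : MeasurableSet ({x : ℕ | n * a ∣ x} ∩ ⋂ p ∈ P, {x | ¬ p ∣ x}) :=
        MeasurableSet.of_discrete
      have hfin : μ ({x : ℕ | n * a ∣ x} ∩ ⋂ p ∈ P, {x | ¬ p ∣ x}) ≠ ⊤ :=
        (measure_lt_top μ _).ne
      rw [hset, measure_diff hsub hmeas.nullMeasurableSet hfin, ih hP1' hPc' n hn hnP',
        ih hP1' hPc' (n * a) hna1 hnaP]
      -- now pure arithmetic with ENNReal.ofReal
      have hprod0 : 0 ≤ ∏ p ∈ P, (1 - (p : ℝ) ^ (-s)) :=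
        Finset.prod_nonneg fun p hp => by
          have := rpow_neg_le_one hs0 (hP1' p hp); linarith
      have hmul : ((n * a : ℕ) : ℝ) ^ (-s) = (n : ℝ) ^ (-s) * (a : ℝ) ^ (-s) := by
        rw [Nat.cast_mul, Real.mul_rpow (Nat.cast_nonneg n) (Nat.cast_nonneg a)]
      rw [← ENNReal.ofReal_sub _ (by positivity)]
      congr 1
      rw [hmul, Finset.prod_insert ha]
      ring

/-- One can find a finset of primes, none dividing `m`, with product of `1 - p^(-s)` small. -/
private lemma keyB (s : ℝ) (hs0 : 0 < s) (hs1 : s ≤ 1) (m : ℕ) (hm : 1 ≤ m)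
    (ε : ℝ) (hε : 0 < ε) :
    ∃ P : Finset ℕ, (∀ p ∈ P, Nat.Prime p) ∧ (∀ p ∈ P, ¬ p ∣ m) ∧
      ∏ p ∈ P, (1 - (p : ℝ) ^ (-s)) < ε := by
  classical
  have hnotsum : ¬ Summable (fun p : Nat.Primes => ((p : ℕ) : ℝ) ^ (-s)) := by
    rw [Nat.Primes.summable_rpow]
    linarith
  have hpos : (0 : Nat.Primes → ℝ) ≤ fun p : Nat.Primes => ((p : ℕ) : ℝ) ^ (-s) :=
    fun p => rpow_neg_nonneg
  set M : ℝ := (m + 1 : ℝ) + (max 0 (- Real.log ε) + 1) with hM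
  obtain ⟨u, hu⟩ : ∃ u : Finset Nat.Primes, M < ∑ p ∈ u, ((p : ℕ) : ℝ) ^ (-s) := by
    by_contra h
    push_neg at h
    exact hnotsum (summable_of_sum_le hpos h)
  set P0 : Finset ℕ := u.image (fun p : Nat.Primes => (p : ℕ)) with hP0
  have hP0prime : ∀ p ∈ P0, Nat.Prime p := by
    intro p hp
    rw [hP0, Finset.mem_image] at hp
    obtain ⟨q, _, rfl⟩ := hp
    exact q.prop
  have hP0sum : ∑ p ∈ P0, (p : ℝ) ^ (-s) = ∑ p ∈ u, ((p : ℕ) : ℝ) ^ (-s) := by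
    rw [hP0]
    exact Finset.sum_image (fun a _ b _ h => Subtype.coe_injective h)
  set P : Finset ℕ := P0.filter (fun p => ¬ p ∣ m) with hPdef
  have hPprime : ∀ p ∈ P, Nat.Prime p := fun p hp =>
    hP0prime p (Finset.mem_of_mem_filter p hp)
  have hPndvd : ∀ p ∈ P, ¬ p ∣ m := fun p hp => (Finset.mem_filter.mp hp).2
  refine ⟨P, hPprime, hPndvd, ?_⟩
  -- sum over P is still large
  have hsplit : ∑ p ∈ P, (p : ℝ) ^ (-s) + ∑ p ∈ P0.filter (fun p => p ∣ m), (p : ℝ) ^ (-s)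
      = ∑ p ∈ P0, (p : ℝ) ^ (-s) := by
    rw [hPdef, add_comm]
    exact Finset.sum_filter_add_sum_filter_not P0 (fun p => p ∣ m) _
  have hdvdsmall : ∑ p ∈ P0.filter (fun p => p ∣ m), (p : ℝ) ^ (-s) ≤ (m + 1 : ℝ) := by
    calc ∑ p ∈ P0.filter (fun p => p ∣ m), (p : ℝ) ^ (-s)
        ≤ ∑ _p ∈ P0.filter (fun p => p ∣ m), (1 : ℝ) := by
          apply Finset.sum_le_sum
          intro p hp
          exact rpow_neg_le_one hs0 (hP0prime p (Finset.mem_of_mem_filter p hp)).one_lt.le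
      _ = (P0.filter (fun p => p ∣ m)).card := by simp
      _ ≤ (m + 1 : ℝ) := by
          have hsubset : P0.filter (fun p => p ∣ m) ⊆ Finset.range (m + 1) := by
            intro p hp
            rw [Finset.mem_range]
            rcases Finset.mem_filter.mp hp with ⟨hp0, hpm⟩
            exact Nat.lt_succ_of_le (Nat.le_of_dvd hm hpm)
          have := Finset.card_le_card hsubset
          rw [Finset.card_range] at this
          exact_mod_cast this
  have hPsum : max 0 (- Real.log ε) + 1 ≤ ∑ p ∈ P, (p : ℝ) ^ (-s) := by
    rw [hP0sum] at hsplit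
    nlinarith [hu]
  -- now bound the product by exp of minus the sum
  have hstep : ∏ p ∈ P, (1 - (p : ℝ) ^ (-s)) ≤ Real.exp (- ∑ p ∈ P, (p : ℝ) ^ (-s)) := by
    rw [← Finset.sum_neg_distrib, Real.exp_sum]
    apply Finset.prod_le_prod
    · intro p hp
      have := rpow_neg_le_one hs0 (hPprime p hp).one_lt.le
      linarith
    · intro p hp
      have := Real.add_one_le_exp (-(p : ℝ) ^ (-s))
      linarith
  have hexp : Real.exp (- ∑ p ∈ P, (p : ℝ) ^ (-s)) < ε := by
    have h1 : Real.exp (- ∑ p ∈ P, (p : ℝ) ^ (-s))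
        ≤ Real.exp (-(max 0 (- Real.log ε) + 1)) := by
      apply Real.exp_le_exp.mpr
      linarith
    have h2 : Real.exp (-(max 0 (- Real.log ε) + 1)) < ε := by
      have hmax : -Real.log ε ≤ (0 : ℝ) ⊔ (-Real.log ε) := le_sup_right
      have h3 : Real.exp (-(max 0 (- Real.log ε) + 1)) ≤ Real.exp (Real.log ε - 1) :=
        Real.exp_le_exp.mpr (by simp only [max_def] at *; linarith)
      have h4 : Real.exp (Real.log ε - 1) < ε := by
        rw [Real.exp_sub, Real.exp_log hε]
        have he : (1 : ℝ) < Real.exp 1 := by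
          have := Real.exp_one_gt_d9; linarith
        exact div_lt_self hε he
      linarith
    linarith
  linarith

/-- For `0 < s ≤ 1` there is no probability measure on the positive integers giving the set
of multiples of `n` the measure `n ^ (-s)` for every `n ≥ 1`. -/
theorem no_probability_measure_with_divisibility_rpow (s : ℝ) (hs0 : 0 < s) (hs1 : s ≤ 1) :
    ¬ ∃ μ : Measure ℕ, IsProbabilityMeasure μ ∧ μ {0} = 0 ∧
        ∀ n : ℕ, 1 ≤ n → μ {x | n ∣ x} = ENNReal.ofReal ((n : ℝ) ^ (-s)) := by
  rintro ⟨μ, hprob, h0, hμ⟩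
  -- every singleton has measure zero
  have hsingle : ∀ m : ℕ, μ {m} = 0 := by
    intro m
    rcases Nat.eq_zero_or_pos m with rfl | hm
    · exact h0
    -- bound μ {m} by ofReal ε for every ε > 0
    have hbound : ∀ ε : ℝ, 0 < ε → μ {m} ≤ ENNReal.ofReal ε := by
      intro ε hε
      obtain ⟨P, hPprime, hPndvd, hPprod⟩ := keyB s hs0 hs1 m hm ε hε
      have hP1 : ∀ p ∈ P, 1 ≤ p := fun p hp => (hPprime p hp).one_lt.le
      have hPc : (P : Set ℕ).Pairwise Nat.Coprime := by
        intro p hp q hq hpq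
        exact (Nat.coprime_primes (hPprime p hp) (hPprime q hq)).mpr hpq
      have hmP : ∀ p ∈ P, Nat.Coprime m p := by
        intro p hp
        exact Nat.Coprime.symm (((hPprime p hp).coprime_iff_not_dvd).mpr (hPndvd p hp))
      have hsub : {m} ⊆ {x : ℕ | m ∣ x} ∩ ⋂ p ∈ P, {x | ¬ p ∣ x} := by
        rw [Set.singleton_subset_iff]
        refine ⟨dvd_refl m, ?_⟩
        simp only [Set.mem_iInter, Set.mem_setOf_eq]
        exact fun p hp => hPndvd p hp
      calc μ {m} ≤ μ ({x : ℕ | m ∣ x} ∩ ⋂ p ∈ P, {x | ¬ p ∣ x}) := measure_mono hsub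
        _ = ENNReal.ofReal ((m : ℝ) ^ (-s) * ∏ p ∈ P, (1 - (p : ℝ) ^ (-s))) :=
            keyA μ hprob s hs0 hμ P hP1 hPc m hm hmP
        _ ≤ ENNReal.ofReal ε := by
            apply ENNReal.ofReal_le_ofReal
            have h1 : (m : ℝ) ^ (-s) ≤ 1 := rpow_neg_le_one hs0 hm
            have h2 : 0 ≤ ∏ p ∈ P, (1 - (p : ℝ) ^ (-s)) :=
              Finset.prod_nonneg fun p hp => by
                have := rpow_neg_le_one hs0 (hP1 p hp); linarith
            nlinarith [rpow_neg_nonneg (s := s) (p := m)]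
    by_contra hne
    have hlt : μ {m} ≤ ENNReal.ofReal ((μ {m}).toReal / 2) := by
      apply hbound
      have : μ {m} ≠ ⊤ := (measure_lt_top μ _).ne
      have h0' : 0 < (μ {m}).toReal := ENNReal.toReal_pos hne this
      linarith
    have hfin : μ {m} ≠ ⊤ := (measure_lt_top μ _).ne
    have h0' : 0 < (μ {m}).toReal := ENNReal.toReal_pos hne hfin
    have hlt2 : (μ {m}).toReal ≤ (μ {m}).toReal / 2 := by
      have := ENNReal.toReal_mono ENNReal.ofReal_ne_top hlt
      rwa [ENNReal.toReal_ofReal (by linarith)] at this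
    linarith
  -- hence the total measure is zero, contradiction
  have huniv : μ Set.univ = 0 := by
    have : (Set.univ : Set ℕ) = ⋃ n : ℕ, {n} := by
      ext x; simp
    rw [this, measure_iUnion (fun i j hij => by simpa using hij)
      (fun i => MeasurableSet.of_discrete)]
    simp [hsingle]
  rw [measure_univ] at huniv
  exact one_ne_zero huniv
end

section
/- Let s > 1 and let X be a random variable with the Zeta law of parameter s. Then the probability that X is squarefree (i.e., not divisible by p² for any prime p) equals 1/ζ(2s). -/
open MeasureTheory ENNReal

/-- The sum `ζ(s) = ∑_{n ≥ 1} n ^ (-s)` (the `n = 0` term vanishes since `0 ^ (-s) = 0`). -/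
noncomputable def zetaSum (s : ℝ) : ℝ := ∑' n : ℕ, (n : ℝ) ^ (-s)

/-- The Zeta law of parameter `s`: the probability measure on the positive integers
assigning mass `n ^ (-s) / ζ(s)` to each `n ≥ 1`. -/
noncomputable def zetaMeasure (s : ℝ) : Measure ℕ :=
  Measure.count.withDensity fun n => ENNReal.ofReal ((n : ℝ) ^ (-s) / zetaSum s)

lemma sq_mul_squarefree_unique {m₁ d₁ m₂ d₂ : ℕ} (hm₁ : Squarefree m₁) (hm₂ : Squarefree m₂)
    (hd₁ : d₁ ≠ 0) (hd₂ : d₂ ≠ 0) (h : d₁ ^ 2 * m₁ = d₂ ^ 2 * m₂) : m₁ = m₂ ∧ d₁ = d₂ := by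
  have hm₁0 := hm₁.ne_zero
  have hm₂0 := hm₂.ne_zero
  have key : ∀ p : ℕ, 2 * d₁.factorization p + m₁.factorization p
      = 2 * d₂.factorization p + m₂.factorization p := by
    intro p
    have h1 := congrArg (fun n => Nat.factorization n p) h
    simp only [Nat.factorization_mul (pow_ne_zero 2 hd₁) hm₁0,
      Nat.factorization_mul (pow_ne_zero 2 hd₂) hm₂0, Nat.factorization_pow,
      Finsupp.coe_add, Finsupp.coe_smul, Pi.add_apply, Pi.smul_apply,
      smul_eq_mul] at h1
    omega
  have hle₁ := (Nat.squarefree_iff_factorization_le_one hm₁0).mp hm₁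
  have hle₂ := (Nat.squarefree_iff_factorization_le_one hm₂0).mp hm₂
  constructor
  · exact Nat.eq_of_factorization_eq hm₁0 hm₂0 fun p => by
      have := key p; have := hle₁ p; have := hle₂ p; omega
  · exact Nat.eq_of_factorization_eq hd₁ hd₂ fun p => by
      have := key p; have := hle₁ p; have := hle₂ p; omega

/-- If `X` follows the Zeta law of parameter `s > 1`, the probability that `X` is squarefree
equals `1 / ζ(2s)`. -/
theorem zetaMeasure_squarefree (s : ℝ) (hs : 1 < s) :
    zetaMeasure s {x | Squarefree x} = ENNReal.ofReal (1 / zetaSum (2 * s)) := by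
  have hsum : Summable (fun n : ℕ => (n : ℝ) ^ (-s)) :=
    Real.summable_nat_rpow.mpr (by linarith)
  have hsum2 : Summable (fun n : ℕ => (n : ℝ) ^ (-(2 * s))) :=
    Real.summable_nat_rpow.mpr (by linarith)
  have hnn : ∀ n : ℕ, (0:ℝ) ≤ (n : ℝ) ^ (-s) := fun n => Real.rpow_nonneg (Nat.cast_nonneg n) _
  have hnn2 : ∀ n : ℕ, (0:ℝ) ≤ (n : ℝ) ^ (-(2*s)) := fun n => Real.rpow_nonneg (Nat.cast_nonneg n) _
  have hζ1 : (1:ℝ) ≤ zetaSum s := by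
    have := Summable.le_tsum hsum 1 (fun n _ => hnn n)
    simpa [zetaSum, Real.one_rpow] using this
  have hζ2_1 : (1:ℝ) ≤ zetaSum (2 * s) := by
    have := Summable.le_tsum hsum2 1 (fun n _ => hnn2 n)
    simpa [zetaSum, Real.one_rpow] using this
  have hζpos : (0:ℝ) < zetaSum s := lt_of_lt_of_le one_pos hζ1
  have hζ2pos : (0:ℝ) < zetaSum (2 * s) := lt_of_lt_of_le one_pos hζ2_1
  set A : ℕ → ℝ≥0∞ := fun n => ENNReal.ofReal ((n : ℝ) ^ (-s)) with hA
  set B : ℕ → ℝ≥0∞ := fun n => ENNReal.ofReal ((n : ℝ) ^ (-(2 * s))) with hB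
  have hA0 : A 0 = 0 := by
    simp [hA, Real.zero_rpow (neg_ne_zero.mpr (by linarith : s ≠ 0))]
  have hB0 : B 0 = 0 := by
    simp [hB, Real.zero_rpow (neg_ne_zero.mpr (by positivity : 2 * s ≠ 0))]
  -- totals
  have hAtot : ∑' n : ℕ, A n = ENNReal.ofReal (zetaSum s) := by
    rw [zetaSum, ENNReal.ofReal_tsum_of_nonneg hnn hsum]
  have hBtot : ∑' n : ℕ, B n = ENNReal.ofReal (zetaSum (2 * s)) := by
    rw [zetaSum, ENNReal.ofReal_tsum_of_nonneg hnn2 hsum2]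
  -- the bijection
  have hbij : Function.Bijective
      (fun p : {m : ℕ // Squarefree m} × {d : ℕ // d ≠ 0} =>
        (⟨p.2.1 ^ 2 * p.1.1, by
          have := p.1.2.ne_zero; have := p.2.2; positivity⟩ : {n : ℕ // n ≠ 0})) := by
    constructor
    · rintro ⟨⟨m₁, hm₁⟩, ⟨d₁, hd₁⟩⟩ ⟨⟨m₂, hm₂⟩, ⟨d₂, hd₂⟩⟩ hEq
      have h : d₁ ^ 2 * m₁ = d₂ ^ 2 * m₂ := congrArg Subtype.val hEq
      obtain ⟨h1, h2⟩ := sq_mul_squarefree_unique hm₁ hm₂ hd₁ hd₂ h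
      simp [h1, h2]
    · rintro ⟨n, hn⟩
      obtain ⟨a, b, ha, hb, hab, hsq⟩ := Nat.sq_mul_squarefree_of_pos (Nat.pos_of_ne_zero hn)
      exact ⟨⟨⟨a, hsq⟩, ⟨b, hb.ne'⟩⟩, by simpa using hab⟩
  -- multiplicative splitting of A on products d^2 * m
  have hmul : ∀ (m d : ℕ), A (d ^ 2 * m) = B d * A m := by
    intro m d
    have hd : (0:ℝ) ≤ (d:ℝ) := Nat.cast_nonneg d
    have : ((d ^ 2 * m : ℕ) : ℝ) ^ (-s) = (d:ℝ) ^ (-(2 * s)) * (m:ℝ) ^ (-s) := by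
      push_cast
      rw [Real.mul_rpow (by positivity) (Nat.cast_nonneg m), ← Real.rpow_natCast (d:ℝ) 2,
        ← Real.rpow_mul hd]
      rw [show ((2:ℕ):ℝ) * -s = -(2 * s) by push_cast; ring]
    rw [hA, hB]
    simp only [this]
    rw [ENNReal.ofReal_mul (hnn2 d)]
  -- main identity: ζ(s) = S * ζ(2s)
  set S : ℝ≥0∞ := ∑' m : {m : ℕ // Squarefree m}, A m with hS
  have hmain : ENNReal.ofReal (zetaSum s) = S * ENNReal.ofReal (zetaSum (2 * s)) := by
    rw [← hAtot, ← hBtot]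
    have h1 : ∑' n : ℕ, A n = ∑' n : {n : ℕ // n ≠ 0}, A n := by
      refine (tsum_subtype_eq_of_support_subset ?_).symm
      intro n hn
      simp only [Function.mem_support] at hn
      intro h0
      exact hn (h0 ▸ hA0)
    have h2 : ∑' n : {n : ℕ // n ≠ 0}, A n
        = ∑' p : {m : ℕ // Squarefree m} × {d : ℕ // d ≠ 0},
            A ((p.2.1 : ℕ) ^ 2 * p.1.1) :=
      ((Equiv.ofBijective _ hbij).tsum_eq (fun n => A n)).symm
    have h3 : ∑' p : {m : ℕ // Squarefree m} × {d : ℕ // d ≠ 0},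
            A ((p.2.1 : ℕ) ^ 2 * p.1.1)
        = (∑' m : {m : ℕ // Squarefree m}, A m) * ∑' d : {d : ℕ // d ≠ 0}, B d := by
      calc ∑' p : {m : ℕ // Squarefree m} × {d : ℕ // d ≠ 0}, A ((p.2.1 : ℕ) ^ 2 * p.1.1)
          = ∑' (m : {m : ℕ // Squarefree m}) (d : {d : ℕ // d ≠ 0}), B d * A m := by
            rw [ENNReal.tsum_prod']; simp_rw [hmul]
        _ = ∑' (m : {m : ℕ // Squarefree m}), A m * ∑' d : {d : ℕ // d ≠ 0}, B d := by
            congr 1; funext m; rw [ENNReal.tsum_mul_right, mul_comm]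
        _ = _ := ENNReal.tsum_mul_right
    have h4 : ∑' d : {d : ℕ // d ≠ 0}, B d = ∑' d : ℕ, B d := by
      apply tsum_subtype_eq_of_support_subset
      intro n hn
      simp only [Function.mem_support] at hn
      intro h0
      exact hn (h0 ▸ hB0)
    rw [h1, h2, h3, h4]
  -- compute the measure
  have hζne : ENNReal.ofReal (zetaSum s) ≠ 0 := by
    simp [ENNReal.ofReal_eq_zero, not_le, hζpos]
  have hζ2ne : ENNReal.ofReal (zetaSum (2 * s)) ≠ 0 := by
    simp [ENNReal.ofReal_eq_zero, not_le, hζ2pos]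
  have hmeas : zetaMeasure s {x | Squarefree x}
      = ∑' m : {m : ℕ // Squarefree m}, ENNReal.ofReal ((m : ℝ) ^ (-s) / zetaSum s) := by
    rw [zetaMeasure, withDensity_apply _ (by trivial : MeasurableSet {x : ℕ | Squarefree x}),
      ← lintegral_indicator (by trivial), MeasureTheory.lintegral_count, ← tsum_subtype]
    rfl
  have hdiv : ∀ m : ℕ, ENNReal.ofReal ((m : ℝ) ^ (-s) / zetaSum s)
      = A m * (ENNReal.ofReal (zetaSum s))⁻¹ := by
    intro m
    rw [ENNReal.ofReal_div_of_pos hζpos, div_eq_mul_inv]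
  rw [hmeas]
  simp_rw [hdiv]
  rw [ENNReal.tsum_mul_right, ← hS]
  have hSval : S = ENNReal.ofReal (zetaSum s) * (ENNReal.ofReal (zetaSum (2 * s)))⁻¹ := by
    rw [hmain]
    rw [mul_assoc, ENNReal.mul_inv_cancel hζ2ne ENNReal.ofReal_ne_top, mul_one]
  rw [hSval, mul_assoc, ← ENNReal.ofReal_inv_of_pos hζ2pos]
  rw [mul_comm (ENNReal.ofReal (zetaSum (2*s))⁻¹), ← mul_assoc,
    ENNReal.mul_inv_cancel hζne ENNReal.ofReal_ne_top, one_mul, one_div]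
end

section
/- Let s > 1 and let X and Y be independent random variables, each with the Zeta law of parameter s. Then the probability that X and Y are coprime, i.e., gcd(X, Y) = 1, equals 1/ζ(2s). -/
/-! Writing each pair `(m, n)` as `d • (a, b)` with `a, b` coprime factors
`ζ(s)² = ∑ (m n) ^ (-s)` as `ζ(2s) · ∑_{a ⊥ b} (a b) ^ (-s)`. By independence the probability that
`X` and `Y` are coprime is `∑_{a ⊥ b} (a b) ^ (-s) / ζ(s)²`, which is therefore `1 / ζ(2s)`. -/

open MeasureTheory ProbabilityTheory

open scoped ENNReal

namespace Nat

theorem eq_of_nsmul_eq_nsmul_of_coprime {d d' : ℕ} {q q' : ℕ × ℕ} (hd : d ≠ 0)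
    (hq : q.1.Coprime q.2) (hq' : q'.1.Coprime q'.2) (h : d • q = d' • q') : d = d' ∧ q = q' := by
  have hgcd : ∀ (c : ℕ) (p : ℕ × ℕ), p.1.Coprime p.2 → gcd (c • p).1 (c • p).2 = c := by
    intro c p hp
    simp only [Prod.smul_fst, Prod.smul_snd, smul_eq_mul, gcd_mul_left, hp.gcd_eq_one, mul_one]
  have hdd' : d = d' := by rw [← hgcd d q hq, ← hgcd d' q' hq', h]
  subst hdd'
  exact ⟨rfl, smul_right_injective _ hd h⟩

theorem exists_nsmul_eq_of_coprime (q : ℕ × ℕ) :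
    ∃ (d : ℕ) (p : ℕ × ℕ), p.1.Coprime p.2 ∧ d • p = q := by
  obtain ⟨a, b, hab, ha, hb⟩ := exists_coprime q.1 q.2
  exact ⟨gcd q.1 q.2, (a, b), hab,
    Prod.ext ((mul_comm _ _).trans ha.symm) ((mul_comm _ _).trans hb.symm)⟩

end Nat

theorem ENNReal.tsum_mul_tsum {α β : Type*} (f : α → ℝ≥0∞) (g : β → ℝ≥0∞) :
    (∑' a, f a) * ∑' b, g b = ∑' p : α × β, f p.1 * g p.2 := by
  simp only [ENNReal.tsum_prod', ENNReal.tsum_mul_left, ENNReal.tsum_mul_right]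

section CompletelyMultiplicative

variable {w : ℕ → ℝ≥0∞}

/-- Every pair `(m, n)` is `d • (a, b)` with `a, b` coprime, uniquely when `d ≠ 0`; the pairs
with `d = 0` carry no weight. -/
theorem tsum_mul_tsum_eq_tsum_sq_mul_tsum_coprime (hw0 : w 0 = 0)
    (hw : ∀ m n, w (m * n) = w m * w n) :
    (∑' n, w n) * ∑' n, w n =
      (∑' d, w d ^ 2) * ∑' q : {q : ℕ × ℕ // q.1.Coprime q.2}, w q.1.1 * w q.1.2 := by
  rw [ENNReal.tsum_mul_tsum, ENNReal.tsum_mul_tsum]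
  have hscale : ∀ x : ℕ × {q : ℕ × ℕ // q.1.Coprime q.2},
      w (x.1 • x.2.1).1 * w (x.1 • x.2.1).2 = w x.1 ^ 2 * (w x.2.1.1 * w x.2.1.2) := by
    intro x
    simp only [Prod.smul_fst, Prod.smul_snd, smul_eq_mul, hw]
    ring
  refine tsum_eq_tsum_of_ne_zero_bij (fun x => x.1.1 • x.1.2.1) ?_ ?_ fun x => hscale x
  · intro ⟨⟨d, q, hq⟩, hx⟩ ⟨⟨d', q', hq'⟩, _⟩ h
    have hd : d ≠ 0 := by
      rintro rfl
      simp [hw0] at hx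
    obtain ⟨rfl, rfl⟩ := Nat.eq_of_nsmul_eq_nsmul_of_coprime hd hq hq' h
    rfl
  · intro q hq
    obtain ⟨d, p, hp, rfl⟩ := Nat.exists_nsmul_eq_of_coprime q
    exact ⟨⟨(d, ⟨p, hp⟩), by simpa [Function.mem_support, ← hscale] using hq⟩, rfl⟩

theorem tsum_coprime_div_mul_div_eq_inv (hw0 : w 0 = 0) (hw : ∀ m n, w (m * n) = w m * w n)
    (hZ0 : ∑' n, w n ≠ 0) (hZ : ∑' n, w n ≠ ∞) :
    ∑' q : {q : ℕ × ℕ // q.1.Coprime q.2}, w q.1.1 / (∑' n, w n) * (w q.1.2 / ∑' n, w n) =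
      (∑' d, w d ^ 2)⁻¹ := by
  set Z := ∑' n, w n
  set P := ∑' q : {q : ℕ × ℕ // q.1.Coprime q.2}, w q.1.1 * w q.1.2
  have key : Z * Z = (∑' d, w d ^ 2) * P := tsum_mul_tsum_eq_tsum_sq_mul_tsum_coprime hw0 hw
  have hZZ0 : Z * Z ≠ 0 := mul_ne_zero hZ0 hZ0
  have hZZ : Z * Z ≠ ∞ := ENNReal.mul_ne_top hZ hZ
  have hP0 : P ≠ 0 := right_ne_zero_of_mul (key ▸ hZZ0)
  have hP : P ≠ ∞ := fun h =>
    hZZ (by rw [key, h, ENNReal.mul_top (left_ne_zero_of_mul (key ▸ hZZ0))])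
  calc ∑' q : {q : ℕ × ℕ // q.1.Coprime q.2}, w q.1.1 / Z * (w q.1.2 / Z)
      = P / (Z * Z) := by
        rw [div_eq_mul_inv, ENNReal.mul_inv (.inl hZ0) (.inl hZ), ← ENNReal.tsum_mul_right]
        refine tsum_congr fun q => ?_
        rw [div_eq_mul_inv, div_eq_mul_inv]
        ring
    _ = 1 * P / ((∑' d, w d ^ 2) * P) := by rw [key, one_mul]
    _ = (∑' d, w d ^ 2)⁻¹ := by rw [ENNReal.mul_div_mul_right _ _ hP0 hP, one_div]

end CompletelyMultiplicative

theorem MeasureTheory.Measure.prod_apply_eq_tsum_subtype {α β : Type*} [MeasurableSpace α]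
    [MeasurableSpace β] [Countable α] [Countable β] [MeasurableSingletonClass α]
    [MeasurableSingletonClass β] (μ : Measure α) (ν : Measure β) [SFinite ν] (s : Set (α × β)) :
    μ.prod ν s = ∑' x : s, μ {x.1.1} * ν {x.1.2} := by
  rw [tsum_subtype s fun x => μ {x.1} * ν {x.2},
    ← (μ.prod ν).tsum_indicator_apply_singleton s s.to_countable.measurableSet]
  congr! with x
  rw [← Set.singleton_prod_singleton, Measure.prod_prod]

noncomputable def zetaWeight (s : ℝ) (n : ℕ) : ℝ≥0∞ := ENNReal.ofReal ((n : ℝ) ^ (-s))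

theorem zetaWeight_zero {s : ℝ} (hs : s ≠ 0) : zetaWeight s 0 = 0 := by
  simp [zetaWeight, Real.zero_rpow (neg_ne_zero.2 hs)]

theorem zetaWeight_mul (s : ℝ) (m n : ℕ) :
    zetaWeight s (m * n) = zetaWeight s m * zetaWeight s n := by
  rw [zetaWeight, Nat.cast_mul, Real.mul_rpow m.cast_nonneg n.cast_nonneg,
    ENNReal.ofReal_mul (Real.rpow_nonneg m.cast_nonneg _)]
  rfl

theorem zetaWeight_sq (s : ℝ) (n : ℕ) : zetaWeight s n ^ 2 = zetaWeight (2 * s) n := by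
  rw [zetaWeight, zetaWeight, ← ENNReal.ofReal_pow (Real.rpow_nonneg n.cast_nonneg _),
    ← Real.rpow_natCast, ← Real.rpow_mul n.cast_nonneg]
  ring_nf

theorem summable_nat_rpow_neg {s : ℝ} (hs : 1 < s) : Summable fun n : ℕ => (n : ℝ) ^ (-s) :=
  Real.summable_nat_rpow.2 (neg_lt_neg hs)

theorem tsum_zetaWeight {s : ℝ} (hs : 1 < s) :
    ∑' n, zetaWeight s n = ENNReal.ofReal (zetaSum s) :=
  (ENNReal.ofReal_tsum_of_nonneg (fun n => Real.rpow_nonneg n.cast_nonneg _)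
    (summable_nat_rpow_neg hs)).symm

theorem zetaSum_pos {s : ℝ} (hs : 1 < s) : 0 < zetaSum s :=
  (summable_nat_rpow_neg hs).tsum_pos (fun n => Real.rpow_nonneg n.cast_nonneg _) 1 (by simp)

instance (s : ℝ) : SigmaFinite (zetaMeasure s) := by
  unfold zetaMeasure
  infer_instance

theorem zetaMeasure_singleton {s : ℝ} (hs : 1 < s) (n : ℕ) :
    zetaMeasure s {n} = zetaWeight s n / ∑' k, zetaWeight s k := by
  rw [zetaMeasure, withDensity_apply _ (measurableSet_singleton n), lintegral_singleton,
    Measure.count_singleton, mul_one, ENNReal.ofReal_div_of_pos (zetaSum_pos hs),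
    tsum_zetaWeight hs, zetaWeight]

theorem zeta_coprime_probability_general {Ω : Type*} [MeasurableSpace Ω] (μ : Measure Ω)
    (s : ℝ) (hs : 1 < s) (X Y : Ω → ℕ)
    (hX : Measurable X) (hY : Measurable Y) (hXY : IndepFun X Y μ)
    (hlX : μ.map X = zetaMeasure s) (hlY : μ.map Y = zetaMeasure s) :
    μ {ω | Nat.gcd (X ω) (Y ω) = 1} = ENNReal.ofReal (1 / zetaSum (2 * s)) := by
  have hlaw : μ.map (fun ω => (X ω, Y ω)) = (zetaMeasure s).prod (zetaMeasure s) := by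
    have h := (indepFun_iff_map_prod_eq_prod_map_map' hX.aemeasurable hY.aemeasurable
      (hlX ▸ inferInstance) (hlY ▸ inferInstance)).1 hXY
    rwa [hlX, hlY] at h
  have hZ : ∑' n, zetaWeight s n = ENNReal.ofReal (zetaSum s) := tsum_zetaWeight hs
  calc μ {ω | Nat.gcd (X ω) (Y ω) = 1}
      = (zetaMeasure s).prod (zetaMeasure s) {q : ℕ × ℕ | q.1.Coprime q.2} := by
        rw [← hlaw, Measure.map_apply (hX.prodMk hY) (Set.to_countable _).measurableSet]
        rfl
    _ = ∑' q : {q : ℕ × ℕ // q.1.Coprime q.2}, zetaWeight s q.1.1 / (∑' n, zetaWeight s n) *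
          (zetaWeight s q.1.2 / ∑' n, zetaWeight s n) := by
        simp only [Measure.prod_apply_eq_tsum_subtype, zetaMeasure_singleton hs]
        rfl
    _ = (∑' d, zetaWeight (2 * s) d)⁻¹ := by
        rw [tsum_coprime_div_mul_div_eq_inv (zetaWeight_zero (by linarith)) (zetaWeight_mul s)
          (by simp [hZ, zetaSum_pos hs]) (by simp [hZ])]
        simp only [zetaWeight_sq]
    _ = ENNReal.ofReal (1 / zetaSum (2 * s)) := by
        rw [tsum_zetaWeight (by linarith), one_div,
          ENNReal.ofReal_inv_of_pos (zetaSum_pos (by linarith))]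

/-- If `X` and `Y` are independent random variables, each following the Zeta law of
parameter `s > 1`, then the probability that `X` and `Y` are coprime equals `1 / ζ(2s)`. -/
theorem zeta_coprime_probability {Ω : Type*} [MeasurableSpace Ω] (μ : Measure Ω)
    [IsProbabilityMeasure μ] (s : ℝ) (hs : 1 < s) (X Y : Ω → ℕ)
    (hX : Measurable X) (hY : Measurable Y) (hXY : IndepFun X Y μ)
    (hlX : μ.map X = zetaMeasure s) (hlY : μ.map Y = zetaMeasure s) :
    μ {ω | Nat.gcd (X ω) (Y ω) = 1} = ENNReal.ofReal (1 / zetaSum (2 * s)) :=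
  zeta_coprime_probability_general μ s hs X Y hX hY hXY hlX hlY
end

section
/- Let μ and ν be two probability measures on the positive integers such that for every n ≥ 1, μ({x : n ∣ x}) = ν({x : n ∣ x}). Then μ = ν. In other words, the law of a random variable with values in ℕ∗ is characterized by the probabilities P(n ∣ X) for n ranging over the positive integers. -/
open MeasureTheory MeasurableSpace

/-- The law of a random variable with values in the positive integers is characterized by
the probabilities of the divisibility events: two probability measures on the positive
integers agreeing on the set of multiples of `n` for every `n ≥ 1` are equal. -/
theorem measure_eq_of_divisibility_events (μ ν : Measure ℕ)
    [IsProbabilityMeasure μ] [IsProbabilityMeasure ν]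
    (hμ0 : μ {0} = 0) (hν0 : ν {0} = 0)
    (h : ∀ n : ℕ, 1 ≤ n → μ {x | n ∣ x} = ν {x | n ∣ x}) :
    μ = ν := by
  set S : Set (Set ℕ) := {s | ∃ n : ℕ, 1 ≤ n ∧ s = {x | n ∣ x}} with hS
  have hmem : ∀ n : ℕ, 1 ≤ n → MeasurableSet[generateFrom S] {x | n ∣ x} := fun n hn =>
    measurableSet_generateFrom ⟨n, hn, rfl⟩
  have h0 : MeasurableSet[generateFrom S] {0} := by
    have h0eq : ({0} : Set ℕ) = ⋂ n : ℕ, {x | (n + 1) ∣ x} := by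
      ext x
      simp only [Set.mem_singleton_iff, Set.mem_iInter, Set.mem_setOf_eq]
      constructor
      · rintro rfl n; exact dvd_zero _
      · intro hx
        by_contra hx0
        have := Nat.le_of_dvd (Nat.pos_of_ne_zero hx0) (hx x)
        omega
    rw [h0eq]
    exact MeasurableSet.iInter fun n => hmem (n + 1) (by omega)
  have hsingle : ∀ k : ℕ, MeasurableSet[generateFrom S] {k} := by
    intro k
    rcases Nat.eq_zero_or_pos k with rfl | hk
    · exact h0
    · have hk' : ({k} : Set ℕ) =
          {x | k ∣ x} \ ({0} ∪ ⋃ j : ℕ, {x | (k * (j + 2)) ∣ x}) := by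
        ext x
        simp only [Set.mem_singleton_iff, Set.mem_diff, Set.mem_setOf_eq, Set.mem_union,
          Set.mem_iUnion]
        constructor
        · rintro rfl
          refine ⟨dvd_refl _, ?_⟩
          push_neg
          refine ⟨by omega, fun j hj => ?_⟩
          have := Nat.le_of_dvd hk hj
          nlinarith
        · rintro ⟨⟨m, rfl⟩, hx⟩
          push_neg at hx
          obtain ⟨hx0, hx2⟩ := hx
          have hm : m ≠ 0 := by rintro rfl; simp at hx0
          have hm2 : m < 2 := by
            by_contra hm2
            exact hx2 (m - 2) (by rw [Nat.sub_add_cancel (by omega)])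
          interval_cases m <;> simp_all
      rw [hk']
      exact (hmem k hk).diff
        (h0.union (MeasurableSet.iUnion fun j => hmem _ (Nat.mul_pos hk (by omega))))
  have hgen : (inferInstance : MeasurableSpace ℕ) = generateFrom S := by
    apply le_antisymm
    · intro s _
      have hs : s = ⋃ x ∈ s, {x} := by simp
      rw [hs]
      exact MeasurableSet.biUnion s.to_countable (fun x _ => hsingle x)
    · exact generateFrom_le fun t _ => trivial
  refine ext_of_generate_finite S hgen ?_ ?_ ?_
  · rintro s ⟨m, hm, rfl⟩ t ⟨n, hn, rfl⟩ -
    refine ⟨Nat.lcm m n, Nat.one_le_iff_ne_zero.mpr (Nat.lcm_ne_zero (by omega) (by omega)), ?_⟩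
    ext x
    simp [Nat.lcm_dvd_iff]
  · rintro s ⟨n, hn, rfl⟩; exact h n hn
  · simp
end

section
/- Let (μₙ)ₙ≥1 and μ be probability measures on the positive integers. Assume that (μₙ) is tight and that for every N ≥ 1, μₙ({x : N ∣ x}) → μ({x : N ∣ x}) as n → ∞. Then (μₙ) converges in law to μ, i.e., μₙ({k}) → μ({k}) for every positive integer k. -/
/-!
Write `M N = {x | N ∣ x}`. Since `M a ∩ M b = M (lcm a b)`, inclusion–exclusion shows that the
masses of finite unions of the `M N` converge as well. Given a finite `F` carrying all but `ε` of
every mass, `{k}` differs from `M k \ ⋃ M m`, over the multiples `m ≠ k` of `k` lying in `F`, only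
by a set disjoint from `F`; so `μₙ {k}` stays within `ε` of a convergent sequence. The atom at `0`
is approximated in the same way by `M N` for any `N > max F`.
-/

open MeasureTheory Filter Topology

theorem tendsto_of_forall_approx {ι X : Type*} [PseudoMetricSpace X] {l : Filter ι}
    {f : ι → X} {x : X}
    (h : ∀ ε > 0, ∃ g : ι → X, ∃ y, Tendsto g l (𝓝 y) ∧ (∀ i, dist (f i) (g i) ≤ ε) ∧
      dist x y ≤ ε) :
    Tendsto f l (𝓝 x) := by
  refine Metric.tendsto_nhds.2 fun ε hε => ?_
  obtain ⟨g, y, hg, hfg, hxy⟩ := h (ε / 3) (by positivity)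
  filter_upwards [Metric.tendsto_nhds.1 hg (ε / 3) (by positivity)] with i hi
  calc dist (f i) x ≤ dist (f i) (g i) + dist (g i) y + dist y x := dist_triangle4 _ _ _ _
    _ < ε := by linarith [hfg i, dist_comm x y]

theorem tendsto_measureReal_union {ι α : Type*} [MeasurableSpace α] {l : Filter ι}
    {μ : ι → Measure α} {ν : Measure α} [∀ i, IsFiniteMeasure (μ i)] [IsFiniteMeasure ν]
    {s t : Set α} (ht : MeasurableSet t)
    (hs : Tendsto (fun i => (μ i).real s) l (𝓝 (ν.real s)))
    (ht' : Tendsto (fun i => (μ i).real t) l (𝓝 (ν.real t)))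
    (hst : Tendsto (fun i => (μ i).real (s ∩ t)) l (𝓝 (ν.real (s ∩ t)))) :
    Tendsto (fun i => (μ i).real (s ∪ t)) l (𝓝 (ν.real (s ∪ t))) := by
  have h (ρ : Measure α) [IsFiniteMeasure ρ] :
      ρ.real (s ∪ t) = ρ.real s + ρ.real t - ρ.real (s ∩ t) :=
    eq_sub_of_add_eq (measureReal_union_add_inter ht)
  simp only [h]
  exact (hs.add ht').sub hst

theorem measureReal_compl_le_of_ofReal_le {α : Type*} [MeasurableSpace α] (ρ : Measure α)
    [IsProbabilityMeasure ρ] {s : Set α} (hs : MeasurableSet s) {ε : ℝ}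
    (h : ENNReal.ofReal (1 - ε) ≤ ρ s) : ρ.real sᶜ ≤ ε := by
  rw [probReal_compl_eq_one_sub hs]
  have := (ENNReal.ofReal_le_iff_le_toReal (measure_ne_top ρ s)).1 h
  rw [← measureReal_def] at this
  linarith

theorem exists_finset_measureReal_compl_le (ρ : Measure ℕ) [IsFiniteMeasure ρ] {ε : ℝ}
    (hε : 0 < ε) : ∃ F : Finset ℕ, ρ.real (↑F)ᶜ ≤ ε := by
  have h : Tendsto (fun m => ρ.real (Set.Iic m)) atTop (𝓝 (ρ.real Set.univ)) :=
    (ENNReal.tendsto_toReal (measure_ne_top ρ _)).comp (tendsto_measure_Iic_atTop ρ)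
  obtain ⟨m, hm⟩ := (h.eventually (lt_mem_nhds (sub_lt_self _ hε))).exists
  refine ⟨Finset.Iic m, ?_⟩
  rw [measureReal_compl .of_discrete, Finset.coe_Iic]
  linarith

theorem dist_measureReal_singleton_le (ρ : Measure ℕ) [IsFiniteMeasure ρ] (k : ℕ)
    (F : Finset ℕ) :
    dist (ρ.real {k}) (ρ.real {x | k ∣ x} -
      ρ.real (⋃ m ∈ F.filter (fun m => k ∣ m ∧ m ≠ k), {x | m ∣ x})) ≤ ρ.real (↑F)ᶜ := by
  set U := ⋃ m ∈ F.filter (fun m => k ∣ m ∧ m ≠ k), {x | m ∣ x}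
  have hkU : k ∉ U := by
    simp only [U, Set.mem_iUnion, Finset.mem_filter, not_exists]
    exact fun m ⟨_, hkm, hne⟩ hmk => hne (Nat.dvd_antisymm hmk hkm)
  have hsub : {k} ∪ U ⊆ {x | k ∣ x} := by
    rintro y (rfl | hy)
    · exact dvd_refl _
    · simp only [U, Set.mem_iUnion, Finset.mem_filter] at hy
      obtain ⟨m, ⟨_, hkm, _⟩, hmy⟩ := hy
      exact hkm.trans hmy
  have hrest : {x | k ∣ x} \ ({k} ∪ U) ⊆ (↑F)ᶜ := by
    rintro y ⟨hky, hy⟩ hyF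
    refine hy (Or.inr ?_)
    simp only [U, Set.mem_iUnion, Finset.mem_filter]
    exact ⟨y, ⟨hyF, hky, fun h => hy (Or.inl h)⟩, dvd_refl y⟩
  have hsplit : ρ.real {x | k ∣ x} - ρ.real U =
      ρ.real {k} + ρ.real ({x | k ∣ x} \ ({k} ∪ U)) := by
    rw [measureReal_sdiff hsub .of_discrete,
      measureReal_union (Set.disjoint_singleton_left.2 hkU) .of_discrete (measure_ne_top _ _)
        (measure_ne_top _ _)]
    ring
  rw [hsplit, Real.dist_eq, sub_add_cancel_left, abs_neg, abs_of_nonneg measureReal_nonneg]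
  exact measureReal_mono hrest

theorem dist_measureReal_zero_le (ρ : Measure ℕ) [IsFiniteMeasure ρ] (F : Finset ℕ) :
    dist (ρ.real {0}) (ρ.real {x | F.sup id + 1 ∣ x}) ≤ ρ.real (↑F)ᶜ := by
  have hsub : {0} ⊆ {x | F.sup id + 1 ∣ x} := by simp
  have hrest : {x | F.sup id + 1 ∣ x} \ {0} ⊆ (↑F)ᶜ := by
    rintro y ⟨hy, hy0⟩ hyF
    have hlarge : F.sup id + 1 ≤ y := Nat.le_of_dvd (Nat.pos_of_ne_zero hy0) hy
    have hsmall : y ≤ F.sup id := Finset.le_sup (f := id) hyF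
    omega
  rw [Real.dist_eq, abs_sub_comm, ← measureReal_sdiff hsub .of_discrete,
    abs_of_nonneg measureReal_nonneg]
  exact measureReal_mono hrest

section Multiples

variable {ι : Type*} {l : Filter ι} {μ : ι → Measure ℕ} {ν : Measure ℕ}
  [∀ i, IsFiniteMeasure (μ i)] [IsFiniteMeasure ν]

theorem tendsto_measureReal_inter_biUnion_dvd
    (hdiv : ∀ N, Tendsto (fun i => (μ i).real {x | N ∣ x}) l (𝓝 (ν.real {x | N ∣ x})))
    (S : Finset ℕ) (d : ℕ) :
    Tendsto (fun i => (μ i).real ({x | d ∣ x} ∩ ⋃ m ∈ S, {x | m ∣ x})) l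
      (𝓝 (ν.real ({x | d ∣ x} ∩ ⋃ m ∈ S, {x | m ∣ x}))) := by
  -- the factor `M d` makes the induction close: `M d ∩ (M a ∪ U) = M (lcm d a) ∪ (M d ∩ U)`
  induction S using Finset.induction_on generalizing d with
  | empty => simpa using tendsto_const_nhds
  | insert a S _ ih =>
    have hsplit : {x | d ∣ x} ∩ ⋃ m ∈ insert a S, {x | m ∣ x} =
        {x | d.lcm a ∣ x} ∪ ({x | d ∣ x} ∩ ⋃ m ∈ S, {x | m ∣ x}) := by
      ext x
      simp [Nat.lcm_dvd_iff, and_or_left]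
    have hinter : {x | d.lcm a ∣ x} ∩ ({x | d ∣ x} ∩ ⋃ m ∈ S, {x | m ∣ x}) =
        {x | d.lcm a ∣ x} ∩ ⋃ m ∈ S, {x | m ∣ x} := by
      have hsub : {x | d.lcm a ∣ x} ⊆ {x | d ∣ x} := fun x hx => (Nat.dvd_lcm_left d a).trans hx
      rw [← Set.inter_assoc, Set.inter_eq_left.2 hsub]
    rw [hsplit]
    refine tendsto_measureReal_union .of_discrete (hdiv _) (ih d) ?_
    rw [hinter]
    exact ih _

theorem tendsto_measureReal_biUnion_dvd
    (hdiv : ∀ N, Tendsto (fun i => (μ i).real {x | N ∣ x}) l (𝓝 (ν.real {x | N ∣ x})))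
    (S : Finset ℕ) :
    Tendsto (fun i => (μ i).real (⋃ m ∈ S, {x | m ∣ x})) l
      (𝓝 (ν.real (⋃ m ∈ S, {x | m ∣ x}))) := by
  simpa using tendsto_measureReal_inter_biUnion_dvd hdiv S 1

theorem tendsto_measureReal_dvd_of_tight
    (hcover : ∀ ε > 0, ∃ F : Finset ℕ, (∀ i, (μ i).real (↑F)ᶜ ≤ ε) ∧ ν.real (↑F)ᶜ ≤ ε)
    (hdiv : ∀ N, 1 ≤ N →
      Tendsto (fun i => (μ i).real {x | N ∣ x}) l (𝓝 (ν.real {x | N ∣ x})))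
    (N : ℕ) :
    Tendsto (fun i => (μ i).real {x | N ∣ x}) l (𝓝 (ν.real {x | N ∣ x})) := by
  rcases Nat.eq_zero_or_pos N with rfl | hN
  · simp only [zero_dvd_iff, Set.ofPred_eq_eq_singleton]
    refine tendsto_of_forall_approx fun ε hε => ?_
    obtain ⟨F, hμF, hνF⟩ := hcover ε hε
    exact ⟨_, _, hdiv _ (Nat.succ_pos _), fun i => (dist_measureReal_zero_le _ F).trans (hμF i),
      (dist_measureReal_zero_le _ F).trans hνF⟩
  · exact hdiv N hN

theorem tendsto_measureReal_singleton_of_tight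
    (hcover : ∀ ε > 0, ∃ F : Finset ℕ, (∀ i, (μ i).real (↑F)ᶜ ≤ ε) ∧ ν.real (↑F)ᶜ ≤ ε)
    (hdiv : ∀ N, Tendsto (fun i => (μ i).real {x | N ∣ x}) l (𝓝 (ν.real {x | N ∣ x})))
    (k : ℕ) :
    Tendsto (fun i => (μ i).real {k}) l (𝓝 (ν.real {k})) := by
  refine tendsto_of_forall_approx fun ε hε => ?_
  obtain ⟨F, hμF, hνF⟩ := hcover ε hε
  have hlim := (hdiv k).sub (tendsto_measureReal_biUnion_dvd hdiv
    (F.filter fun m => k ∣ m ∧ m ≠ k))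
  exact ⟨_, _, hlim, fun i => (dist_measureReal_singleton_le _ k F).trans (hμF i),
    (dist_measureReal_singleton_le _ k F).trans hνF⟩

end Multiples

theorem tendsto_of_tight_of_divisibility_general (μ : ℕ → Measure ℕ) (ν : Measure ℕ)
    (hμprob : ∀ n, IsProbabilityMeasure (μ n)) [IsProbabilityMeasure ν]
    (htight : ∀ ε : ℝ, 0 < ε → ∃ F : Finset ℕ, ∀ n, ENNReal.ofReal (1 - ε) ≤ μ n ↑F)
    (hdiv : ∀ N : ℕ, 1 ≤ N →
      Tendsto (fun n => μ n {x | N ∣ x}) atTop (𝓝 (ν {x | N ∣ x}))) :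
    ∀ k : ℕ, 1 ≤ k → Tendsto (fun n => μ n {k}) atTop (𝓝 (ν {k})) := by
  intro k _
  have hcover : ∀ ε > 0, ∃ F : Finset ℕ, (∀ n, (μ n).real (↑F)ᶜ ≤ ε) ∧ ν.real (↑F)ᶜ ≤ ε := by
    intro ε hε
    obtain ⟨F, hF⟩ := htight ε hε
    obtain ⟨G, hG⟩ := exists_finset_measureReal_compl_le ν hε
    have hFG : (↑(F ∪ G) : Set ℕ)ᶜ ⊆ (↑F)ᶜ ∩ (↑G)ᶜ := by simp
    exact ⟨F ∪ G, fun n => (measureReal_mono (hFG.trans Set.inter_subset_left)).trans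
      (measureReal_compl_le_of_ofReal_le (μ n) .of_discrete (hF n)),
      (measureReal_mono (hFG.trans Set.inter_subset_right)).trans hG⟩
  have hdivReal : ∀ N, 1 ≤ N →
      Tendsto (fun n => (μ n).real {x | N ∣ x}) atTop (𝓝 (ν.real {x | N ∣ x})) :=
    fun N hN => (ENNReal.tendsto_toReal (measure_ne_top _ _)).comp (hdiv N hN)
  rw [← ENNReal.tendsto_toReal_iff (fun n => measure_ne_top _ _) (measure_ne_top _ _)]
  exact tendsto_measureReal_singleton_of_tight hcover
    (tendsto_measureReal_dvd_of_tight hcover hdivReal) k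

/-- Let `(μₙ)` and `ν` be probability measures on the positive integers. If `(μₙ)` is tight
and `μₙ({x : N ∣ x}) → ν({x : N ∣ x})` for every `N ≥ 1`, then `μₙ` converges in law
to `ν`. -/
theorem tendsto_of_tight_of_divisibility (μ : ℕ → Measure ℕ) (ν : Measure ℕ)
    (hμprob : ∀ n, IsProbabilityMeasure (μ n)) [IsProbabilityMeasure ν]
    (hμ0 : ∀ n, μ n {0} = 0) (hν0 : ν {0} = 0)
    (htight : ∀ ε : ℝ, 0 < ε → ∃ F : Finset ℕ, ∀ n, ENNReal.ofReal (1 - ε) ≤ μ n ↑F)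
    (hdiv : ∀ N : ℕ, 1 ≤ N →
      Tendsto (fun n => μ n {x | N ∣ x}) atTop (𝓝 (ν {x | N ∣ x}))) :
    ∀ k : ℕ, 1 ≤ k → Tendsto (fun n => μ n {k}) atTop (𝓝 (ν {k})) :=
  tendsto_of_tight_of_divisibility_general μ ν hμprob htight hdiv
end

section
/- For each n ≥ 1, let Xₙ and Yₙ be independent random variables, each uniform on {1, …, n}; let Zₙ = gcd(Xₙ, Yₙ) and let Wₙ = r(Xₙ), where r(m) is the largest integer a such that a² divides m. Then both (Zₙ) and (Wₙ) converge in law to the Zeta law of parameter 2: for every positive integer k, P(Zₙ = k) → k^{-2}/ζ(2) and P(Wₙ = k) → k^{-2}/ζ(2) as n → ∞. -/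
open Filter Topology Real

/-- `r m` is the largest integer `a` such that `a ^ 2` divides `m` (for `m ≥ 1`). -/
def squarefullPart (m : ℕ) : ℕ := Nat.findGreatest (fun a => a ^ 2 ∣ m) m

/-!
Scaling out `k` (resp. `k²`) reduces both counts to coprime pairs in `[1, m]²` (resp. squarefree
numbers in `[1, m]`) with `m = ⌊n/k⌋` (resp. `⌊n/k²⌋`). Since `d ∣ r q ↔ d² ∣ q`, both are sets
where an integer-valued function equals `1` (`gcd`, resp. `r`), and Möbius inversion over its
divisors counts them as `∑_{d ≤ m} μ(d) ⌊m/d⌋²`, resp. `∑_{d ≤ m} μ(d) ⌊m/d²⌋`. Normalised, the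
`d`-th term tends to `μ(d)/d²` and is bounded by `1/d²`, so by dominated convergence both densities
tend to `∑ μ(d)/d² = 1/ζ(2) = 6/π²`.
-/

open ArithmeticFunction Finset
open scoped ArithmeticFunction.Moebius

lemma Nat.dvd_of_sq_dvd_sq_mul_of_squarefree {d s t : ℕ} (ht : Squarefree t)
    (h : d ^ 2 ∣ s ^ 2 * t) : d ∣ s := by
  rcases Nat.eq_zero_or_pos (d.gcd s) with hg | hg
  · rw [(Nat.gcd_eq_zero_iff.mp hg).2]
    exact dvd_zero d
  obtain ⟨g, d', s', hg0, hcop, rfl, rfl⟩ := Nat.exists_coprime' hg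
  have h' : d' ^ 2 ∣ s' ^ 2 * t := by
    refine Nat.dvd_of_mul_dvd_mul_right (pow_pos hg0 2) ?_
    convert h using 1 <;> ring
  have hd' : d' = 1 :=
    Nat.isUnit_iff.mp (ht d' (by rw [← sq]; exact (hcop.pow 2 2).dvd_of_dvd_mul_left h'))
  simp [hd']

lemma squarefullPart_sq_mul_of_squarefree (s : ℕ) {t : ℕ} (ht : Squarefree t) :
    squarefullPart (s ^ 2 * t) = s := by
  have ht0 : 0 < t := Nat.pos_of_ne_zero ht.ne_zero
  refine Nat.findGreatest_eq_iff.mpr ⟨?_, fun _ => dvd_mul_right _ _, fun n hsn hn hdvd => ?_⟩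
  · exact (Nat.le_self_pow two_ne_zero s).trans (Nat.le_mul_of_pos_right _ ht0)
  · obtain rfl : s = 0 :=
      Nat.eq_zero_of_dvd_of_lt (Nat.dvd_of_sq_dvd_sq_mul_of_squarefree ht hdvd) hsn
    rw [zero_pow two_ne_zero, zero_mul] at hn
    omega

lemma sq_dvd_iff_dvd_squarefullPart {d q : ℕ} : d ^ 2 ∣ q ↔ d ∣ squarefullPart q := by
  obtain ⟨t, s, rfl, ht⟩ := Nat.sq_mul_squarefree q
  rw [squarefullPart_sq_mul_of_squarefree s ht]
  exact ⟨Nat.dvd_of_sq_dvd_sq_mul_of_squarefree ht,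
    fun h => (pow_dvd_pow_of_dvd h 2).mul_right t⟩

lemma squarefullPart_sq_mul (k q : ℕ) : squarefullPart (k ^ 2 * q) = k * squarefullPart q := by
  obtain ⟨t, s, rfl, ht⟩ := Nat.sq_mul_squarefree q
  rw [← mul_assoc, ← mul_pow, squarefullPart_sq_mul_of_squarefree _ ht,
    squarefullPart_sq_mul_of_squarefree _ ht]

lemma squarefullPart_eq_one_iff {q : ℕ} : squarefullPart q = 1 ↔ Squarefree q := by
  obtain ⟨t, s, rfl, ht⟩ := Nat.sq_mul_squarefree q
  rw [squarefullPart_sq_mul_of_squarefree s ht]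
  refine ⟨by rintro rfl; simpa using ht, fun h => Nat.isUnit_iff.mp (h s ?_)⟩
  rw [← sq]
  exact dvd_mul_right _ _

lemma squarefullPart_le (q : ℕ) : squarefullPart q ≤ q := Nat.findGreatest_le q

lemma squarefullPart_pos {q : ℕ} (hq : 0 < q) : 0 < squarefullPart q :=
  Nat.le_findGreatest hq (by simp)

lemma sum_divisors_moebius (n : ℕ) : ∑ d ∈ n.divisors, μ d = if n = 1 then 1 else 0 := by
  have h := congr_arg (· n) moebius_mul_coe_zeta
  simp only [coe_mul_zeta_apply, one_apply] at h
  exact h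

lemma card_filter_eq_one_eq_sum_moebius {α : Type*} (S : Finset α) (g : α → ℕ) {m : ℕ}
    (hg : ∀ x ∈ S, g x ∈ Icc 1 m) :
    (#{x ∈ S | g x = 1} : ℤ) = ∑ d ∈ Icc 1 m, μ d * #{x ∈ S | d ∣ g x} := by
  have hdiv : ∀ x ∈ S, {d ∈ Icc 1 m | d ∣ g x} = (g x).divisors := by
    intro x hx
    ext d
    have := mem_Icc.mp (hg x hx)
    simp only [mem_filter, mem_Icc, Nat.mem_divisors]
    constructor
    · rintro ⟨-, hd⟩
      exact ⟨hd, by omega⟩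
    · rintro ⟨hd, -⟩
      exact ⟨⟨Nat.pos_of_dvd_of_pos hd (by omega), (Nat.le_of_dvd (by omega) hd).trans this.2⟩,
        hd⟩
  calc (#{x ∈ S | g x = 1} : ℤ) = ∑ x ∈ S, ∑ d ∈ (g x).divisors, μ d := by
        simp [sum_divisors_moebius, sum_boole]
    _ = ∑ x ∈ S, ∑ d ∈ Icc 1 m, if d ∣ g x then μ d else 0 := by
        refine sum_congr rfl fun x hx => ?_
        rw [← sum_filter, hdiv x hx]
    _ = ∑ d ∈ Icc 1 m, μ d * #{x ∈ S | d ∣ g x} := by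
        rw [sum_comm]
        simp [← sum_filter, mul_comm]

lemma card_filter_dvd_Icc (m d : ℕ) : #{x ∈ Icc 1 m | d ∣ x} = m / d := by
  rw [← Nat.Ioc_filter_dvd_card_eq_div, ← Icc_add_one_left_eq_Ioc, zero_add]

lemma card_coprime_pairs_eq_sum_moebius (m : ℕ) :
    (#{p ∈ Icc 1 m ×ˢ Icc 1 m | Nat.gcd p.1 p.2 = 1} : ℤ)
      = ∑ d ∈ Icc 1 m, μ d * (m / d : ℕ) ^ 2 := by
  rw [card_filter_eq_one_eq_sum_moebius _ (fun p : ℕ × ℕ => Nat.gcd p.1 p.2)]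
  · refine sum_congr rfl fun d _ => ?_
    have : {p ∈ Icc 1 m ×ˢ Icc 1 m | d ∣ Nat.gcd p.1 p.2}
        = {a ∈ Icc 1 m | d ∣ a} ×ˢ {b ∈ Icc 1 m | d ∣ b} := by
      simp only [Nat.dvd_gcd_iff, filter_product]
    rw [this, card_product, card_filter_dvd_Icc]
    push_cast
    ring
  · rintro ⟨a, b⟩ hab
    simp only [mem_product, mem_Icc] at hab ⊢
    exact ⟨Nat.gcd_pos_of_pos_left b hab.1.1, (Nat.gcd_le_left b hab.1.1).trans hab.1.2⟩

lemma card_squarefree_eq_sum_moebius (m : ℕ) :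
    (#{q ∈ Icc 1 m | Squarefree q} : ℤ) = ∑ d ∈ Icc 1 m, μ d * (m / d ^ 2 : ℕ) := by
  simp_rw [← squarefullPart_eq_one_iff]
  rw [card_filter_eq_one_eq_sum_moebius _ squarefullPart (m := m)]
  · simp_rw [← sq_dvd_iff_dvd_squarefullPart, card_filter_dvd_Icc]
  · intro q hq
    have := mem_Icc.mp hq
    exact mem_Icc.mpr ⟨squarefullPart_pos this.1, (squarefullPart_le q).trans this.2⟩

lemma tsum_moebius_div_sq : ∑' d : ℕ, (μ d : ℝ) / d ^ 2 = 6 / π ^ 2 := by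
  have h := LSeries_one_mul_Lseries_moebius (s := 2) (by norm_num)
  rw [LSeries_one_eq_riemannZeta (by norm_num), riemannZeta_two] at h
  have hπ : (π : ℂ) ≠ 0 := Complex.ofReal_ne_zero.mpr pi_ne_zero
  have hL : LSeries (fun n => (μ n : ℂ)) 2 = 6 / π ^ 2 := by
    field_simp at h ⊢
    linear_combination h
  apply Complex.ofReal_injective
  push_cast
  rw [← hL, LSeries]
  refine tsum_congr fun d => ?_
  rcases eq_or_ne d 0 with rfl | hd
  · simp
  · simp [LSeries.term_of_ne_zero hd]

lemma natCast_div_div_self_le (m c : ℕ) : ((m / c : ℕ) : ℝ) / m ≤ 1 / c := by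
  rcases eq_or_ne m 0 with rfl | hm
  · simp
  calc ((m / c : ℕ) : ℝ) / m ≤ (m / c : ℝ) / m := by gcongr; exact Nat.cast_div_le
    _ = 1 / c := by field_simp

lemma tendsto_natCast_div_div_self (c : ℕ) :
    Tendsto (fun m : ℕ => ((m / c : ℕ) : ℝ) / m) atTop (𝓝 (1 / c)) := by
  rcases Nat.eq_zero_or_pos c with rfl | hc
  · simp
  have hc' : (0 : ℝ) < c := by exact_mod_cast hc
  have h := (tendsto_nat_floor_div_atTop.comp
    ((tendsto_natCast_atTop_atTop (R := ℝ)).atTop_div_const hc')).mul_const (1 / (c : ℝ))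
  rw [one_mul] at h
  refine h.congr fun m => ?_
  rw [Function.comp_apply, Nat.floor_div_eq_div]
  rcases eq_or_ne m 0 with rfl | hm
  · simp
  field_simp

lemma tendsto_sum_moebius_mul {g : ℕ → ℕ → ℝ}
    (hlim : ∀ d, Tendsto (g d) atTop (𝓝 (1 / d ^ 2))) (hle : ∀ d m, |g d m| ≤ 1 / d ^ 2) :
    Tendsto (fun m => ∑ d ∈ Icc 1 m, (μ d : ℝ) * g d m) atTop (𝓝 (6 / π ^ 2)) := by
  have h := tendsto_tsum_of_dominated_convergence (𝓕 := atTop)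
    (f := fun m d => if d ∈ Icc 1 m then (μ d : ℝ) * g d m else 0)
    (g := fun d => (μ d : ℝ) / d ^ 2)
    (Real.summable_one_div_nat_pow.mpr one_lt_two) ?_ ?_
  · rw [tsum_moebius_div_sq] at h
    refine h.congr fun m => ?_
    exact tsum_eq_sum (fun d hd => if_neg hd) |>.trans (sum_congr rfl fun d hd => if_pos hd)
  · intro d
    rcases Nat.eq_zero_or_pos d with rfl | hd
    · simp
    rw [div_eq_mul_one_div]
    refine ((hlim d).const_mul _).congr' ?_
    filter_upwards [eventually_ge_atTop d] with m hm
    rw [if_pos (mem_Icc.mpr ⟨hd, hm⟩)]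
  · refine Eventually.of_forall fun m d => ?_
    split_ifs
    · rw [norm_mul, Real.norm_eq_abs, Real.norm_eq_abs]
      calc |(μ d : ℝ)| * |g d m| ≤ 1 * (1 / d ^ 2) := by
            gcongr
            · exact_mod_cast abs_moebius_le_one
            · exact hle d m
        _ = 1 / d ^ 2 := one_mul _
    · rw [norm_zero]
      positivity

lemma tendsto_card_coprime_pairs_div_sq :
    Tendsto (fun m : ℕ => (#{p ∈ Icc 1 m ×ˢ Icc 1 m | Nat.gcd p.1 p.2 = 1} : ℝ) / m ^ 2)
      atTop (𝓝 (6 / π ^ 2)) := by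
  refine (tendsto_sum_moebius_mul (g := fun d m => (((m / d : ℕ) : ℝ) / m) ^ 2)
    (fun d => ?_) (fun d m => ?_)).congr fun m => ?_
  · simpa [div_pow] using (tendsto_natCast_div_div_self d).pow 2
  · rw [abs_of_nonneg (by positivity), ← one_div_pow]
    exact pow_le_pow_left₀ (by positivity) (natCast_div_div_self_le m d) 2
  · have h : (#{p ∈ Icc 1 m ×ˢ Icc 1 m | Nat.gcd p.1 p.2 = 1} : ℝ)
        = ∑ d ∈ Icc 1 m, (μ d : ℝ) * ((m / d : ℕ) : ℝ) ^ 2 := by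
      rw [← Int.cast_natCast, card_coprime_pairs_eq_sum_moebius m]
      push_cast
      rfl
    rw [h, sum_div]
    refine sum_congr rfl fun d _ => ?_
    ring

lemma tendsto_card_squarefree_div :
    Tendsto (fun m : ℕ => (#{q ∈ Icc 1 m | Squarefree q} : ℝ) / m) atTop (𝓝 (6 / π ^ 2)) := by
  refine (tendsto_sum_moebius_mul (g := fun d m => ((m / d ^ 2 : ℕ) : ℝ) / m)
    (fun d => ?_) (fun d m => ?_)).congr fun m => ?_
  · exact_mod_cast tendsto_natCast_div_div_self (d ^ 2)
  · rw [abs_of_nonneg (by positivity)]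
    exact_mod_cast natCast_div_div_self_le m (d ^ 2)
  · have h : (#{q ∈ Icc 1 m | Squarefree q} : ℝ)
        = ∑ d ∈ Icc 1 m, (μ d : ℝ) * ((m / d ^ 2 : ℕ) : ℝ) := by
      rw [← Int.cast_natCast, card_squarefree_eq_sum_moebius m]
      push_cast
      rfl
    rw [h, sum_div]
    refine sum_congr rfl fun d _ => ?_
    ring

lemma mul_mem_Icc_one_iff {k y n : ℕ} (hk : 0 < k) : k * y ∈ Icc 1 n ↔ y ∈ Icc 1 (n / k) := by
  simp [Nat.one_le_iff_ne_zero, hk.ne', Nat.le_div_iff_mul_le hk, mul_comm]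

lemma card_gcd_eq_eq_card_coprime {k : ℕ} (hk : 0 < k) (n : ℕ) :
    #{p ∈ Icc 1 n ×ˢ Icc 1 n | Nat.gcd p.1 p.2 = k}
      = #{p ∈ Icc 1 (n / k) ×ˢ Icc 1 (n / k) | Nat.gcd p.1 p.2 = 1} := by
  have himage : {p ∈ Icc 1 n ×ˢ Icc 1 n | Nat.gcd p.1 p.2 = k}
      = {p ∈ Icc 1 (n / k) ×ˢ Icc 1 (n / k) | Nat.gcd p.1 p.2 = 1}.image
          (fun p => (k * p.1, k * p.2)) := by
    ext ⟨a, b⟩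
    simp only [mem_filter, mem_product, mem_image, Prod.exists, Prod.mk.injEq]
    constructor
    · rintro ⟨⟨ha, hb⟩, hg⟩
      obtain ⟨a', rfl⟩ : k ∣ a := hg ▸ Nat.gcd_dvd_left a b
      obtain ⟨b', rfl⟩ : k ∣ b := hg ▸ Nat.gcd_dvd_right _ b
      rw [Nat.gcd_mul_left, mul_eq_left₀ hk.ne'] at hg
      exact ⟨a', b', ⟨⟨(mul_mem_Icc_one_iff hk).1 ha, (mul_mem_Icc_one_iff hk).1 hb⟩, hg⟩,
        rfl, rfl⟩
    · rintro ⟨a', b', ⟨⟨ha, hb⟩, hg⟩, rfl, rfl⟩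
      exact ⟨⟨(mul_mem_Icc_one_iff hk).2 ha, (mul_mem_Icc_one_iff hk).2 hb⟩,
        by rw [Nat.gcd_mul_left, hg, mul_one]⟩
  rw [himage, card_image_of_injective]
  rintro ⟨a, b⟩ ⟨a', b'⟩ h
  simp only [Prod.mk.injEq] at h ⊢
  exact ⟨Nat.eq_of_mul_eq_mul_left hk h.1, Nat.eq_of_mul_eq_mul_left hk h.2⟩

lemma squarefullPart_sq_mul_eq_self_iff {k q : ℕ} (hk : 0 < k) :
    squarefullPart (k ^ 2 * q) = k ↔ Squarefree q := by
  rw [squarefullPart_sq_mul, mul_eq_left₀ hk.ne', squarefullPart_eq_one_iff]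

lemma card_squarefullPart_eq_eq_card_squarefree {k : ℕ} (hk : 0 < k) (n : ℕ) :
    #{x ∈ Icc 1 n | squarefullPart x = k} = #{q ∈ Icc 1 (n / k ^ 2) | Squarefree q} := by
  have hk2 : 0 < k ^ 2 := pow_pos hk 2
  have himage : {x ∈ Icc 1 n | squarefullPart x = k}
      = {q ∈ Icc 1 (n / k ^ 2) | Squarefree q}.image (k ^ 2 * ·) := by
    ext x
    simp only [mem_filter, mem_image]
    constructor
    · rintro ⟨hx, hsq⟩
      obtain ⟨q, rfl⟩ : k ^ 2 ∣ x := sq_dvd_iff_dvd_squarefullPart.2 (hsq ▸ dvd_refl k)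
      exact ⟨q, ⟨(mul_mem_Icc_one_iff hk2).1 hx, (squarefullPart_sq_mul_eq_self_iff hk).1 hsq⟩,
        rfl⟩
    · rintro ⟨q, ⟨hq, hsq⟩, rfl⟩
      exact ⟨(mul_mem_Icc_one_iff hk2).2 hq, (squarefullPart_sq_mul_eq_self_iff hk).2 hsq⟩
  rw [himage, card_image_of_injective _ fun a b h => Nat.eq_of_mul_eq_mul_left hk2 h]

lemma tendsto_comp_nat_div_div_pow {f : ℕ → ℝ} {L : ℝ} {c : ℕ} (hc : 0 < c) (j : ℕ)
    (hf : Tendsto (fun m : ℕ => f m / (m : ℝ) ^ j) atTop (𝓝 L)) :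
    Tendsto (fun n : ℕ => f (n / c) / (n : ℝ) ^ j) atTop (𝓝 (L / c ^ j)) := by
  have h := (hf.comp (Nat.tendsto_div_const_atTop hc.ne')).mul
    ((tendsto_natCast_div_div_self c).pow j)
  rw [one_div, inv_pow, ← div_eq_mul_inv] at h
  refine h.congr' ?_
  filter_upwards [eventually_ge_atTop c] with n hn
  have : (0 : ℝ) < (n / c : ℕ) := by exact_mod_cast Nat.div_pos hn hc
  simp only [Function.comp_apply, div_pow]
  field_simp

/-- Let `Xₙ, Yₙ` be independent and uniform on `{1, …, n}`, `Zₙ = gcd (Xₙ, Yₙ)` and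
`Wₙ = r (Xₙ)` where `r m` is the largest `a` with `a ^ 2 ∣ m`. Then both `Zₙ` and `Wₙ`
converge in law to the Zeta law of parameter `2`: for every `k ≥ 1`,
`P(Zₙ = k) → k⁻² / ζ(2)` and `P(Wₙ = k) → k⁻² / ζ(2)`, with `ζ(2) = π²/6`. -/
theorem gcd_and_sqrt_largest_square_divisor_tendsto_zeta_two (k : ℕ) (hk : 1 ≤ k) :
    Tendsto (fun n : ℕ =>
        ((((Finset.Icc 1 n) ×ˢ (Finset.Icc 1 n)).filter
            fun p => Nat.gcd p.1 p.2 = k).card : ℝ) / (n : ℝ) ^ 2)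
      atTop (𝓝 ((1 / (k : ℝ) ^ 2) / (π ^ 2 / 6))) ∧
    Tendsto (fun n : ℕ =>
        (((Finset.Icc 1 n).filter fun x => squarefullPart x = k).card : ℝ) / (n : ℝ))
      atTop (𝓝 ((1 / (k : ℝ) ^ 2) / (π ^ 2 / 6))) := by
  have hlim : (1 / (k : ℝ) ^ 2) / (π ^ 2 / 6) = 6 / π ^ 2 / k ^ 2 := by ring
  refine ⟨?_, ?_⟩
  · rw [hlim]
    simp_rw [card_gcd_eq_eq_card_coprime hk]
    exact tendsto_comp_nat_div_div_pow hk 2 tendsto_card_coprime_pairs_div_sq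
  · rw [hlim]
    simp_rw [card_squarefullPart_eq_eq_card_squarefree hk]
    have h := tendsto_comp_nat_div_div_pow (pow_pos hk 2) 1
      (by simpa using tendsto_card_squarefree_div)
    simpa using h
end
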